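/- arXiv:1007.2307 — 4 statements merged into one kernel-verified Lean document; each statement's English description precedes it below -/
import Mathlib

section
/- Let d ≤ -7 be a real number, set A = e^{-π√(-d)} and D = √(-d/3). Then for all real a with 1 ≤ a ≤ D and all real X ≥ 1/2, one has 1/(1 - A^{X/a}) < 1 + A^{X/(1.03 a)}. -/
theorem stmt_1 (d : ℝ) (hd : d ≤ -7)
    (A : ℝ) (hA : A = Real.exp (-Real.pi * Real.sqrt (-d)))
    (D : ℝ) (hD : D = Real.sqrt (-d / 3)) :
    ∀ a X : ℝ, 1 ≤ a → a ≤ D → 1 / 2 ≤ X →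
      1 / (1 - A ^ (X / a)) < 1 + A ^ (X / (1.03 * a)) := by
  intro a X ha haD hX
  have hnd : (0:ℝ) < -d := by linarith
  set S := Real.sqrt (-d) with hS
  have hS0 : 0 < S := Real.sqrt_pos.mpr hnd
  have hpi : (3.141592:ℝ) < Real.pi := Real.pi_gt_d6
  have hs3 : (1.732:ℝ) ≤ Real.sqrt 3 := by
    rw [show (1.732:ℝ) = Real.sqrt (1.732^2) from (Real.sqrt_sq (by norm_num)).symm]
    exact Real.sqrt_le_sqrt (by norm_num)
  have hs3' : 0 < Real.sqrt 3 := by linarith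
  have hDv : D = S / Real.sqrt 3 := by
    rw [hD, hS, Real.sqrt_div hnd.le]
  have ha0 : 0 < a := by linarith
  have hX0 : 0 < X := by linarith
  set c := Real.pi * S with hc_def
  have hc0 : 0 < c := mul_pos Real.pi_pos hS0
  set u := X / a with hu
  set v := X / (1.03 * a) with hv
  have hu0 : 0 < u := div_pos hX0 ha0
  -- a * √3 ≤ S
  have h1 : a * Real.sqrt 3 ≤ S := by
    rw [hDv] at haD
    calc a * Real.sqrt 3 ≤ (S / Real.sqrt 3) * Real.sqrt 3 := by
          exact mul_le_mul_of_nonneg_right haD hs3'.le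
      _ = S := by field_simp
  -- 2.72 ≤ c * u
  have hcu : (2.72:ℝ) ≤ c * u := by
    have har : a * u = X := by rw [hu]; field_simp
    have step1 : Real.pi * (a * Real.sqrt 3) * u ≤ Real.pi * S * u :=
      mul_le_mul_of_nonneg_right (mul_le_mul_of_nonneg_left h1 Real.pi_pos.le) hu0.le
    have step2 : Real.pi * (a * Real.sqrt 3) * u = Real.pi * Real.sqrt 3 * X := by
      rw [← har]; ring
    have hp3 : (5.44:ℝ) ≤ Real.pi * Real.sqrt 3 := by nlinarith
    have step3 : (2.72:ℝ) ≤ Real.pi * Real.sqrt 3 * X := by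
      nlinarith [mul_le_mul_of_nonneg_right hp3 hX0.le]
    calc (2.72:ℝ) ≤ Real.pi * Real.sqrt 3 * X := step3
      _ = Real.pi * (a * Real.sqrt 3) * u := step2.symm
      _ ≤ Real.pi * S * u := step1
      _ = c * u := by rw [hc_def]
  -- relation between u and v
  have hw : c * u - c * v = 3 / 103 * (c * u) := by
    rw [hu, hv]
    field_simp
    ring
  have hw' : (0.0792:ℝ) ≤ c * u - c * v := by
    rw [hw]; linarith
  -- rpow to exp
  have hrp : ∀ t : ℝ, A ^ t = Real.exp (-(c * t)) := by
    intro t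
    rw [hA, ← Real.exp_mul]
    congr 1
    rw [hc_def]; ring
  rw [hrp u, hrp v]
  set P := Real.exp (-(c * u - c * v)) with hP_def
  set Q := Real.exp (-(c * u)) with hQ_def
  set Es := Real.exp (-(c * v)) with hEs_def
  have hQP : Q = P * Es := by
    rw [hQ_def, hP_def, hEs_def, ← Real.exp_add]
    congr 1; ring
  have hP0 : 0 < P := Real.exp_pos _
  have hQ0 : 0 < Q := Real.exp_pos _
  have hEs0 : 0 < Es := Real.exp_pos _
  -- numeric bound on P
  have hPle : P ≤ (1.0792:ℝ)⁻¹ := by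
    have e1 : Real.exp (0.0792:ℝ) ≤ Real.exp (c * u - c * v) :=
      Real.exp_le_exp.mpr hw'
    have e2 : (1.0792:ℝ) ≤ Real.exp (0.0792:ℝ) := by
      have := Real.add_one_le_exp (0.0792:ℝ)
      linarith
    rw [hP_def, Real.exp_neg]
    apply inv_anti₀ (by norm_num)
    linarith
  -- numeric bound on Q
  have hQle : Q ≤ ((1.0425:ℝ)^64)⁻¹ := by
    have e1 : Real.exp (2.72:ℝ) ≤ Real.exp (c * u) := Real.exp_le_exp.mpr hcu
    have e2 : Real.exp (2.72:ℝ) = Real.exp (0.0425:ℝ) ^ 64 := by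
      rw [← Real.exp_nat_mul]
      norm_num
    have e3 : (1.0425:ℝ) ≤ Real.exp (0.0425:ℝ) := by
      have := Real.add_one_le_exp (0.0425:ℝ)
      linarith
    have e4 : (1.0425:ℝ)^64 ≤ Real.exp (0.0425:ℝ) ^ 64 :=
      pow_le_pow_left₀ (by norm_num) e3 64
    rw [hQ_def, Real.exp_neg]
    apply inv_anti₀ (by positivity)
    calc (1.0425:ℝ)^64 ≤ Real.exp (0.0425:ℝ) ^ 64 := e4
      _ = Real.exp (2.72:ℝ) := e2.symm
      _ ≤ Real.exp (c * u) := e1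
  have hPQ : P + Q < 1 := by
    have : (1.0792:ℝ)⁻¹ + ((1.0425:ℝ)^64)⁻¹ < 1 := by norm_num
    linarith
  -- finish
  have h1Q : 0 < 1 - Q := by linarith
  rw [div_lt_iff₀ h1Q]
  nlinarith [mul_pos hEs0 (show (0:ℝ) < 1 - P - Q by linarith)]
end

section
/- For every integer N ≥ 8, the quantity (4 sin³(π/N)/cos(π/N)) · (1 + e^{-π√3/N}) / (1 - e^{-π√3/N})³ is strictly less than 3.05. -/
set_option maxHeartbeats 1000000

open Real

-- rational lower bound for √3
lemma sqrt3_ge : (1.7320508 : ℝ) ≤ Real.sqrt 3 := by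
  rw [show (1.7320508 : ℝ) = Real.sqrt (1.7320508 ^ 2) from
    (Real.sqrt_sq (by norm_num)).symm]
  exact Real.sqrt_le_sqrt (by norm_num)

lemma sqrt3_le : Real.sqrt 3 ≤ (1.7320509 : ℝ) := by
  rw [show (1.7320509 : ℝ) = Real.sqrt (1.7320509 ^ 2) from
    (Real.sqrt_sq (by norm_num)).symm]
  exact Real.sqrt_le_sqrt (by norm_num)

lemma exp_taylor_le {a : ℝ} (ha : 0 ≤ a) :
    1 + a + a ^ 2 / 2 + a ^ 3 / 6 + a ^ 4 / 24 + a ^ 5 / 120 ≤ Real.exp a := by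
  have h := Real.sum_le_exp_of_nonneg ha 6
  have he : ∑ i ∈ Finset.range 6, a ^ i / (Nat.factorial i)
      = 1 + a + a ^ 2 / 2 + a ^ 3 / 6 + a ^ 4 / 24 + a ^ 5 / 120 := by
    simp [Finset.sum_range_succ, Nat.factorial]
  rw [he] at h
  exact h

lemma case_bound (x u a sb cb Eb : ℝ)
    (hx0 : 0 ≤ x) (hxpi : x ≤ Real.pi)
    (hs : Real.sin x ≤ sb) (hc : cb ≤ Real.cos x) (hcb : 0 < cb)
    (ha : 0 ≤ a) (hau : a ≤ u)
    (hEb0 : 0 < Eb) (hEb1 : Eb < 1)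
    (hP : 1 ≤ Eb * (1 + a + a ^ 2 / 2 + a ^ 3 / 6 + a ^ 4 / 24 + a ^ 5 / 120))
    (hfin : 4 * sb ^ 3 / cb * (1 + Eb) / (1 - Eb) ^ 3 < 3.05) :
    4 * Real.sin x ^ 3 / Real.cos x * (1 + Real.exp (-u)) / (1 - Real.exp (-u)) ^ 3
      < 3.05 := by
  have hE0 : 0 < Real.exp (-u) := Real.exp_pos _
  have hexpu : 1 + a + a ^ 2 / 2 + a ^ 3 / 6 + a ^ 4 / 24 + a ^ 5 / 120 ≤ Real.exp u :=
    (exp_taylor_le ha).trans (Real.exp_le_exp.mpr hau)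
  have hE : Real.exp (-u) ≤ Eb := by
    rw [Real.exp_neg, inv_eq_one_div, div_le_iff₀ (Real.exp_pos u)]
    calc (1 : ℝ) ≤ Eb * (1 + a + a ^ 2 / 2 + a ^ 3 / 6 + a ^ 4 / 24 + a ^ 5 / 120) := hP
      _ ≤ Eb * Real.exp u := mul_le_mul_of_nonneg_left hexpu hEb0.le
  have hsin0 : 0 ≤ Real.sin x := Real.sin_nonneg_of_nonneg_of_le_pi hx0 hxpi
  have hcos : 0 < Real.cos x := lt_of_lt_of_le hcb hc
  have hsb0 : 0 ≤ sb := le_trans hsin0 hs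
  have hden : (0 : ℝ) < 1 - Eb := by linarith
  have hdenE : (0 : ℝ) < 1 - Real.exp (-u) := by linarith
  have key1 : 4 * Real.sin x ^ 3 / Real.cos x * (1 + Real.exp (-u))
      ≤ 4 * sb ^ 3 / cb * (1 + Eb) := by
    have h1 : 4 * Real.sin x ^ 3 / Real.cos x ≤ 4 * sb ^ 3 / cb := by
      apply div_le_div₀ (by positivity)
        (by nlinarith [pow_le_pow_left₀ hsin0 hs 3]) hcb hc
    have h2 : (1 : ℝ) + Real.exp (-u) ≤ 1 + Eb := by linarith
    exact mul_le_mul h1 h2 (by positivity) (by positivity)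
  have key2 : (1 - Eb) ^ 3 ≤ (1 - Real.exp (-u)) ^ 3 :=
    pow_le_pow_left₀ hden.le (by linarith) 3
  calc 4 * Real.sin x ^ 3 / Real.cos x * (1 + Real.exp (-u)) / (1 - Real.exp (-u)) ^ 3
      ≤ 4 * sb ^ 3 / cb * (1 + Eb) / (1 - Eb) ^ 3 := by
        apply div_le_div₀ _ key1 (by positivity) key2
        have h0 : (0:ℝ) ≤ 4 * sb ^ 3 / cb := div_nonneg (by positivity) hcb.le
        nlinarith
    _ < 3.05 := hfin

theorem stmt_3 : ∀ N : ℕ, 8 ≤ N →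
    (4 * Real.sin (Real.pi / N) ^ 3 / Real.cos (Real.pi / N)) *
      (1 + Real.exp (-Real.pi * Real.sqrt 3 / N)) /
      (1 - Real.exp (-Real.pi * Real.sqrt 3 / N)) ^ 3 < 3.05 := by
  intro N hN
  have hpiL := Real.pi_gt_d6
  have hpiU := Real.pi_lt_d6
  have hpi0 := Real.pi_pos
  have h3L := sqrt3_ge
  have h3U := sqrt3_le
  have h30 : (0:ℝ) ≤ Real.sqrt 3 := Real.sqrt_nonneg 3
  rcases Nat.lt_or_ge N 13 with h13 | h13
  · interval_cases N
    all_goals push_cast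
    · -- N = 8
      rw [show -Real.pi * Real.sqrt 3 / (8:ℝ) = -(Real.pi * Real.sqrt 3 / 8) by ring]
      have h2L : (1.4142135 : ℝ) ≤ Real.sqrt 2 := by
        rw [show (1.4142135 : ℝ) = Real.sqrt (1.4142135 ^ 2) from
          (Real.sqrt_sq (by norm_num)).symm]
        exact Real.sqrt_le_sqrt (by norm_num)
      have hs : Real.sin (Real.pi / 8) ≤ 0.382683453 := by
        rw [Real.sin_pi_div_eight]
        have h1 : Real.sqrt (2 - Real.sqrt 2) ≤ Real.sqrt 0.5857865 :=
          Real.sqrt_le_sqrt (by linarith)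
        have h2 : Real.sqrt 0.5857865 ≤ 0.765366906 := by
          rw [show (0.765366906 : ℝ) = Real.sqrt (0.765366906 ^ 2) from
            (Real.sqrt_sq (by norm_num)).symm]
          exact Real.sqrt_le_sqrt (by norm_num)
        linarith
      have hc : (0.923879524 : ℝ) ≤ Real.cos (Real.pi / 8) := by
        rw [Real.cos_pi_div_eight]
        have h1 : Real.sqrt 3.4142135 ≤ Real.sqrt (2 + Real.sqrt 2) :=
          Real.sqrt_le_sqrt (by linarith)
        have h2 : (1.847759048 : ℝ) ≤ Real.sqrt 3.4142135 := by
          rw [show (1.847759048 : ℝ) = Real.sqrt (1.847759048 ^ 2) from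
            (Real.sqrt_sq (by norm_num)).symm]
          exact Real.sqrt_le_sqrt (by norm_num)
        linarith
      refine case_bound _ _ 0.680174617 _ _ 0.506567569 (by positivity)
        (by linarith [div_le_self hpi0.le (show (1:ℝ) ≤ 8 by norm_num)])
        hs hc (by norm_num) (by norm_num) ?_ (by norm_num) (by norm_num)
        (by norm_num) (by norm_num)
      rw [le_div_iff₀ (by norm_num : (0:ℝ) < 8)]
      nlinarith [mul_le_mul hpiL.le h3L (by norm_num) hpi0.le]
    · -- N = 9
      rw [show -Real.pi * Real.sqrt 3 / (9:ℝ) = -(Real.pi * Real.sqrt 3 / 9) by ring]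
      have hx1 : Real.pi / 9 ≤ 3.141593 / 9 := by linarith
      have hx0 : (0:ℝ) ≤ Real.pi / 9 := by positivity
      have hs : Real.sin (Real.pi / 9) ≤ 0.342750383 := by
        have hmono : Real.sin (Real.pi / 9) ≤ Real.sin (3.141593/9) :=
          Real.sin_le_sin_of_le_of_le_pi_div_two (by linarith) (by linarith) hx1
        have hb := Real.sin_bound (x := 3.141593/9) (by rw [abs_of_nonneg] <;> norm_num)
        rw [abs_sub_le_iff] at hb
        have h := hb.1
        rw [abs_of_nonneg (by norm_num : (0:ℝ) ≤ 3.141593/9)] at h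
        have hnum : (3.141593/9 : ℝ) - (3.141593/9)^3/6 + (3.141593/9)^4*(5/96)
            ≤ 0.342750383 := by norm_num
        linarith
      have hc : (0.939076502 : ℝ) ≤ Real.cos (Real.pi / 9) := by
        have h1 := Real.one_sub_sq_div_two_le_cos (x := Real.pi / 9)
        have h2 : (Real.pi/9)^2 ≤ (3.141593/9:ℝ)^2 := pow_le_pow_left₀ hx0 hx1 2
        have hnum : (0.939076502 : ℝ) ≤ 1 - (3.141593/9:ℝ)^2/2 := by norm_num
        linarith
      refine case_bound _ _ 0.604599659 _ _ 0.546315223 hx0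
        (by linarith [div_le_self hpi0.le (show (1:ℝ) ≤ 9 by norm_num)])
        hs hc (by norm_num) (by norm_num) ?_ (by norm_num) (by norm_num)
        (by norm_num) (by norm_num)
      rw [le_div_iff₀ (by norm_num : (0:ℝ) < 9)]
      nlinarith [mul_le_mul hpiL.le h3L (by norm_num) hpi0.le]
    · -- N = 10
      rw [show -Real.pi * Real.sqrt 3 / (10:ℝ) = -(Real.pi * Real.sqrt 3 / 10) by ring]
      have hx1 : Real.pi / 10 ≤ 3.141593 / 10 := by linarith
      have hx0 : (0:ℝ) ≤ Real.pi / 10 := by positivity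
      have hs : Real.sin (Real.pi / 10) ≤ 0.309498925 := by
        have hmono : Real.sin (Real.pi / 10) ≤ Real.sin (3.141593/10) :=
          Real.sin_le_sin_of_le_of_le_pi_div_two (by linarith) (by linarith) hx1
        have hb := Real.sin_bound (x := 3.141593/10) (by rw [abs_of_nonneg] <;> norm_num)
        rw [abs_sub_le_iff] at hb
        have h := hb.1
        rw [abs_of_nonneg (by norm_num : (0:ℝ) ≤ 3.141593/10)] at h
        have hnum : (3.141593/10 : ℝ) - (3.141593/10)^3/6 + (3.141593/10)^4*(5/96)
            ≤ 0.309498925 := by norm_num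
        linarith
      have hc : (0.950651967 : ℝ) ≤ Real.cos (Real.pi / 10) := by
        have h1 := Real.one_sub_sq_div_two_le_cos (x := Real.pi / 10)
        have h2 : (Real.pi/10)^2 ≤ (3.141593/10:ℝ)^2 := pow_le_pow_left₀ hx0 hx1 2
        have hnum : (0.950651967 : ℝ) ≤ 1 - (3.141593/10:ℝ)^2/2 := by norm_num
        linarith
      refine case_bound _ _ 0.544139693 _ _ 0.580353995 hx0
        (by linarith [div_le_self hpi0.le (show (1:ℝ) ≤ 10 by norm_num)])
        hs hc (by norm_num) (by norm_num) ?_ (by norm_num) (by norm_num)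
        (by norm_num) (by norm_num)
      rw [le_div_iff₀ (by norm_num : (0:ℝ) < 10)]
      nlinarith [mul_le_mul hpiL.le h3L (by norm_num) hpi0.le]
    · -- N = 11
      rw [show -Real.pi * Real.sqrt 3 / (11:ℝ) = -(Real.pi * Real.sqrt 3 / 11) by ring]
      have hx1 : Real.pi / 11 ≤ 3.141593 / 11 := by linarith
      have hx0 : (0:ℝ) ≤ Real.pi / 11 := by positivity
      have hs : Real.sin (Real.pi / 11) ≤ 0.282063303 := by
        have hmono : Real.sin (Real.pi / 11) ≤ Real.sin (3.141593/11) :=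
          Real.sin_le_sin_of_le_of_le_pi_div_two (by linarith) (by linarith) hx1
        have hb := Real.sin_bound (x := 3.141593/11) (by rw [abs_of_nonneg] <;> norm_num)
        rw [abs_sub_le_iff] at hb
        have h := hb.1
        rw [abs_of_nonneg (by norm_num : (0:ℝ) ≤ 3.141593/11)] at h
        have hnum : (3.141593/11 : ℝ) - (3.141593/11)^3/6 + (3.141593/11)^4*(5/96)
            ≤ 0.282063303 := by norm_num
        linarith
      have hc : (0.959216501 : ℝ) ≤ Real.cos (Real.pi / 11) := by
        have h1 := Real.one_sub_sq_div_two_le_cos (x := Real.pi / 11)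
        have h2 : (Real.pi/11)^2 ≤ (3.141593/11:ℝ)^2 := pow_le_pow_left₀ hx0 hx1 2
        have hnum : (0.959216501 : ℝ) ≤ 1 - (3.141593/11:ℝ)^2/2 := by norm_num
        linarith
      refine case_bound _ _ 0.494672448 _ _ 0.609778743 hx0
        (by linarith [div_le_self hpi0.le (show (1:ℝ) ≤ 11 by norm_num)])
        hs hc (by norm_num) (by norm_num) ?_ (by norm_num) (by norm_num)
        (by norm_num) (by norm_num)
      rw [le_div_iff₀ (by norm_num : (0:ℝ) < 11)]
      nlinarith [mul_le_mul hpiL.le h3L (by norm_num) hpi0.le]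
    · -- N = 12
      rw [show -Real.pi * Real.sqrt 3 / (12:ℝ) = -(Real.pi * Real.sqrt 3 / 12) by ring]
      have hx1 : Real.pi / 12 ≤ 3.141593 / 12 := by linarith
      have hx0 : (0:ℝ) ≤ Real.pi / 12 := by positivity
      have hs : Real.sin (Real.pi / 12) ≤ 0.259053508 := by
        have hmono : Real.sin (Real.pi / 12) ≤ Real.sin (3.141593/12) :=
          Real.sin_le_sin_of_le_of_le_pi_div_two (by linarith) (by linarith) hx1
        have hb := Real.sin_bound (x := 3.141593/12) (by rw [abs_of_nonneg] <;> norm_num)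
        rw [abs_sub_le_iff] at hb
        have h := hb.1
        rw [abs_of_nonneg (by norm_num : (0:ℝ) ≤ 3.141593/12)] at h
        have hnum : (3.141593/12 : ℝ) - (3.141593/12)^3/6 + (3.141593/12)^4*(5/96)
            ≤ 0.259053508 := by norm_num
        linarith
      have hc : (0.965730532 : ℝ) ≤ Real.cos (Real.pi / 12) := by
        have h1 := Real.one_sub_sq_div_two_le_cos (x := Real.pi / 12)
        have h2 : (Real.pi/12)^2 ≤ (3.141593/12:ℝ)^2 := pow_le_pow_left₀ hx0 hx1 2
        have hnum : (0.965730532 : ℝ) ≤ 1 - (3.141593/12:ℝ)^2/2 := by norm_num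
        linarith
      refine case_bound _ _ 0.453449744 _ _ 0.635437498 hx0
        (by linarith [div_le_self hpi0.le (show (1:ℝ) ≤ 12 by norm_num)])
        hs hc (by norm_num) (by norm_num) ?_ (by norm_num) (by norm_num)
        (by norm_num) (by norm_num)
      rw [le_div_iff₀ (by norm_num : (0:ℝ) < 12)]
      nlinarith [mul_le_mul hpiL.le h3L (by norm_num) hpi0.le]
  · -- tail N ≥ 13
    have hn : (13 : ℝ) ≤ (N : ℝ) := by exact_mod_cast h13
    have hn0 : (0 : ℝ) < (N : ℝ) := by linarith
    set x : ℝ := Real.pi / N with hxdef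
    have hx0 : 0 < x := by positivity
    have hxU : x ≤ 0.24166100 := by
      have h1 : x ≤ Real.pi / 13 :=
        div_le_div_of_nonneg_left hpi0.le (by norm_num) hn
      have h2 : Real.pi / 13 ≤ 3.141593 / 13 := by linarith
      linarith [show (3.141593 : ℝ)/13 ≤ 0.24166100 by norm_num]
    have hrw : -Real.pi * Real.sqrt 3 / (N:ℝ) = -(Real.sqrt 3 * x) := by
      rw [hxdef]; ring
    rw [hrw]
    set t : ℝ := Real.sqrt 3 * x with htdef
    have ht0 : 0 < t := by positivity
    have htU : t ≤ 0.41856916 := by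
      calc t ≤ 1.7320509 * x := mul_le_mul_of_nonneg_right h3U hx0.le
        _ ≤ 1.7320509 * 0.24166100 := by nlinarith
        _ ≤ 0.41856916 := by norm_num
    have hE0 : 0 < Real.exp (-t) := Real.exp_pos _
    have hE1 : Real.exp (-t) ≤ 1 := Real.exp_le_one_iff.mpr (by linarith)
    have hb := Real.exp_bound (x := -t) (by rw [abs_neg, abs_of_nonneg ht0.le]; linarith)
      (n := 4) (by norm_num)
    rw [abs_sub_le_iff] at hb
    have hsum : ∑ m ∈ Finset.range 4, (-t) ^ m / (Nat.factorial m)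
        = 1 - t + t ^ 2 / 2 - t ^ 3 / 6 := by
      simp [Finset.sum_range_succ, Nat.factorial]
      ring
    have habs : |(-t)| ^ 4 * (((4:ℕ).succ) / (((4:ℕ).factorial) * (4:ℕ)) : ℝ)
        = t ^ 4 * (5 / 96) := by
      rw [abs_neg, abs_of_nonneg ht0.le]
      norm_num [Nat.factorial]
    have hEc : Real.exp (-t) ≤ 1 - t + t ^ 2 / 2 - t ^ 3 / 6 + t ^ 4 * (5 / 96) := by
      have h := hb.1
      rw [hsum] at h
      rw [habs] at h
      linarith
    have hq : t * 0.816095 ≤ 1 - Real.exp (-t) := by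
      have hqt : t * 0.816095 ≤ t - t ^ 2 / 2 + t ^ 3 / 6 - t ^ 4 * (5 / 96) := by
        nlinarith [sq_nonneg t, mul_pos ht0 ht0,
          mul_nonneg (mul_nonneg ht0.le ht0.le) ht0.le,
          mul_nonneg (mul_nonneg (mul_nonneg ht0.le ht0.le) ht0.le) ht0.le]
      linarith [hEc]
    have hden : (0:ℝ) < 1 - Real.exp (-t) := by
      have hpos : (0:ℝ) < t * 0.816095 := by nlinarith
      linarith
    have hxpi : x ≤ Real.pi := by linarith
    have hs0 : 0 ≤ Real.sin x := Real.sin_nonneg_of_nonneg_of_le_pi hx0.le hxpi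
    have hsx : Real.sin x ≤ x := (Real.sin_lt hx0).le
    have hcx : (0.970799980 : ℝ) ≤ Real.cos x := by
      have h1 := Real.one_sub_sq_div_two_le_cos (x := x)
      nlinarith [pow_le_pow_left₀ hx0.le hxU 2]
    have hcos0 : (0:ℝ) < Real.cos x := by linarith
    rw [div_lt_iff₀ (by positivity : (0:ℝ) < (1 - Real.exp (-t)) ^ 3)]
    have h1 : Real.sin x ^ 3 ≤ x ^ 3 := pow_le_pow_left₀ hs0 hsx 3
    have h2 : (t * 0.816095) ^ 3 ≤ (1 - Real.exp (-t)) ^ 3 :=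
      pow_le_pow_left₀ (by nlinarith) hq 3
    have hr2 : Real.sqrt 3 * Real.sqrt 3 = 3 := Real.mul_self_sqrt (by norm_num)
    have h3 : (t * 0.816095) ^ 3
        = 3 * Real.sqrt 3 * 0.816095 ^ 3 * x ^ 3 := by
      rw [htdef]
      have he : (Real.sqrt 3 * x * 0.816095) ^ 3
          = (Real.sqrt 3 * Real.sqrt 3) * Real.sqrt 3 * 0.816095 ^ 3 * x ^ 3 := by ring
      rw [he, hr2]
    have hx3 : 0 < x ^ 3 := pow_pos hx0 3
    have hLHS : 4 * Real.sin x ^ 3 / Real.cos x * (1 + Real.exp (-t))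
        ≤ 8 * x ^ 3 / 0.970799980 := by
      have hdiv : 4 * Real.sin x ^ 3 / Real.cos x ≤ 4 * x ^ 3 / 0.970799980 := by
        apply div_le_div₀ (by positivity) (by nlinarith) (by norm_num) hcx
      have h2' : (1:ℝ) + Real.exp (-t) ≤ 2 := by linarith
      calc 4 * Real.sin x ^ 3 / Real.cos x * (1 + Real.exp (-t))
          ≤ 4 * x ^ 3 / 0.970799980 * 2 :=
            mul_le_mul hdiv h2' (by positivity) (by positivity)
        _ = 8 * x ^ 3 / 0.970799980 := by ring
    calc 4 * Real.sin x ^ 3 / Real.cos x * (1 + Real.exp (-t))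
        ≤ 8 * x ^ 3 / 0.970799980 := hLHS
      _ < 3.05 * (3 * 1.7320508 * 0.816095 ^ 3 * x ^ 3) := by
          rw [div_lt_iff₀ (by norm_num : (0:ℝ) < 0.970799980)]
          nlinarith [hx3]
      _ ≤ 3.05 * (1 - Real.exp (-t)) ^ 3 := by
          have hmid : 3 * 1.7320508 * 0.816095 ^ 3 * x ^ 3
              ≤ 3 * Real.sqrt 3 * 0.816095 ^ 3 * x ^ 3 := by
            nlinarith [hx3]
          nlinarith [h2, h3]
end

section
/- For every integer N ≥ 2 and every integer t with 1 ≤ t ≤ N-1, one has |((1 - ζ)/(1 - ζ^t))³ · (1 + ζ^t)/(1 + ζ)| = (sin(π/N)/sin(tπ/N))³ · |cos(tπ/N)|/cos(π/N) ≤ 1, where ζ = e^{2πi/N} and N is such that ζ^t ≠ -1 (e.g. N odd or 2t ≠ N). -/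
open Complex Real

/-!
Writing `ζ = exp (2πi/N)`, the factors `1 - ζ^k` and `1 + ζ^k` have moduli `2 |sin (kπ/N)|` and
`2 |cos (kπ/N)|`. With `a = π/N ≤ x = tπ/N ≤ π - a`, the symmetry `x ↦ π - x` of `sin` and `|cos|`
gives `sin a ≤ sin x` and `|cos x| ≤ cos a`, so both ratios lie in `[0, 1]`.
-/

theorem Complex.one_add_exp_mul_I (z : ℂ) :
    1 + exp (z * I) = 2 * cos (z / 2) * exp (z / 2 * I) := by
  rw [two_cos, add_mul, ← exp_add, ← exp_add]
  ring_nf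
  rw [exp_zero, add_comm]

theorem Complex.norm_one_add_exp_two_mul_I (θ : ℝ) :
    ‖1 + exp (2 * θ * I)‖ = 2 * |Real.cos θ| := by
  rw [one_add_exp_mul_I, mul_div_cancel_left₀ _ two_ne_zero, ← ofReal_cos, norm_mul, norm_mul,
    norm_exp_ofReal_mul_I, norm_real, Real.norm_eq_abs, Complex.norm_two, mul_one]

theorem Complex.norm_one_sub_exp_two_mul_I (θ : ℝ) :
    ‖1 - exp (2 * θ * I)‖ = 2 * |Real.sin θ| := by
  rw [norm_sub_rev, show (2 * θ * I : ℂ) = I * ((2 * θ : ℝ) : ℂ) by push_cast; ring,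
    norm_exp_I_mul_ofReal_sub_one, norm_mul, Real.norm_eq_abs, Real.norm_eq_abs, abs_two,
    mul_div_cancel_left₀ θ two_ne_zero]

theorem Complex.norm_one_sub_exp_div_pow_mul_one_add_exp_div {a x : ℝ} (n : ℕ)
    (hsin_a : 0 ≤ Real.sin a) (hsin_x : 0 ≤ Real.sin x) (hcos_a : 0 ≤ Real.cos a) :
    ‖((1 - exp (2 * a * I)) / (1 - exp (2 * x * I))) ^ n *
        ((1 + exp (2 * x * I)) / (1 + exp (2 * a * I)))‖ =
      (Real.sin a / Real.sin x) ^ n * |Real.cos x| / Real.cos a := by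
  rw [norm_mul, norm_pow, norm_div, norm_div, norm_one_sub_exp_two_mul_I,
    norm_one_sub_exp_two_mul_I, norm_one_add_exp_two_mul_I, norm_one_add_exp_two_mul_I,
    abs_of_nonneg hsin_a, abs_of_nonneg hsin_x, abs_of_nonneg hcos_a,
    mul_div_mul_left _ _ two_ne_zero, mul_div_mul_left _ _ two_ne_zero, mul_div_assoc]

namespace Real

variable {a x : ℝ}

theorem sin_le_sin_of_le_of_le_pi_sub (ha : 0 ≤ a) (hax : a ≤ x) (hxa : x ≤ π - a) :
    sin a ≤ sin x := by
  rcases le_total x (π / 2) with hx | hx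
  · exact sin_le_sin_of_le_of_le_pi_div_two (by linarith) hx hax
  · rw [← sin_pi_sub x]
    exact sin_le_sin_of_le_of_le_pi_div_two (by linarith) (by linarith) (le_sub_comm.1 hxa)

theorem abs_cos_le_cos_of_le_of_le_pi_sub (ha : 0 ≤ a) (hax : a ≤ x) (hxa : x ≤ π - a) :
    |cos x| ≤ cos a := by
  refine abs_le.2 ⟨?_, cos_le_cos_of_nonneg_of_le_pi ha (by linarith) hax⟩
  have := cos_le_cos_of_nonneg_of_le_pi ha (by linarith) (le_sub_comm.1 hxa)
  rw [cos_pi_sub] at this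
  linarith

theorem sin_div_sin_pow_mul_abs_cos_div_cos_le_one (n : ℕ) (ha : 0 ≤ a) (hax : a ≤ x)
    (hxa : x ≤ π - a) : (sin a / sin x) ^ n * |cos x| / cos a ≤ 1 := by
  have hsin_a : 0 ≤ sin a := sin_nonneg_of_nonneg_of_le_pi ha (by linarith)
  have hsin := sin_le_sin_of_le_of_le_pi_sub ha hax hxa
  have hcos := abs_cos_le_cos_of_le_of_le_pi_sub ha hax hxa
  have hsin_x := hsin_a.trans hsin
  have hcos_a := (abs_nonneg _).trans hcos
  rw [mul_div_assoc]
  exact mul_le_one₀ (pow_le_one₀ (div_nonneg hsin_a hsin_x) (div_le_one_of_le₀ hsin hsin_x))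
    (div_nonneg (abs_nonneg _) hcos_a) (div_le_one_of_le₀ hcos hcos_a)

end Real

theorem stmt_4_general (N : ℕ) (t : ℕ) (ht1 : 1 ≤ t) (ht2 : t ≤ N - 1)
    (ζ : ℂ) (hζ : ζ = Complex.exp (2 * Real.pi * Complex.I / N)) :
    ‖((1 - ζ) / (1 - ζ ^ t)) ^ 3 * ((1 + ζ ^ t) / (1 + ζ))‖ =
      (Real.sin (Real.pi / N) / Real.sin (t * Real.pi / N)) ^ 3 *
        |Real.cos (t * Real.pi / N)| / Real.cos (Real.pi / N) ∧
    ‖((1 - ζ) / (1 - ζ ^ t)) ^ 3 * ((1 + ζ ^ t) / (1 + ζ))‖ ≤ 1 := by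
  have hN : (0 : ℝ) < N := by exact_mod_cast (by omega : 0 < N)
  have htN : (t : ℝ) + 1 ≤ N := by exact_mod_cast (by omega : t + 1 ≤ N)
  have hζ_pow (k : ℕ) : ζ ^ k = exp (2 * ((k * π / N : ℝ) : ℂ) * I) := by
    rw [hζ, ← Complex.exp_nat_mul]; congr 1; push_cast; ring
  have hζ_one : ζ = exp (2 * ((π / N : ℝ) : ℂ) * I) := by
    simpa only [pow_one, Nat.cast_one, one_mul] using hζ_pow 1
  have ha : 0 ≤ π / N := by positivity
  have hax : π / N ≤ t * π / N := by
    gcongr; exact le_mul_of_one_le_left pi_pos.le (by exact_mod_cast ht1)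
  have hxa : t * π / N ≤ π - π / N := calc
    t * π / N = (t + 1) * π / N - π / N := by ring
    _ ≤ N * π / N - π / N := by gcongr
    _ = π - π / N := by rw [mul_div_cancel_left₀ _ hN.ne']
  have hnorm := norm_one_sub_exp_div_pow_mul_one_add_exp_div 3
    (sin_nonneg_of_nonneg_of_le_pi ha (by linarith))
    (sin_nonneg_of_nonneg_of_le_pi (ha.trans hax) (by linarith))
    (cos_nonneg_of_neg_pi_div_two_le_of_le (by linarith) (by linarith))
  rw [← hζ_one, ← hζ_pow] at hnorm
  exact ⟨hnorm, hnorm ▸ sin_div_sin_pow_mul_abs_cos_div_cos_le_one 3 ha hax hxa⟩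

theorem stmt_4 (N : ℕ) (hN : 2 ≤ N) (t : ℕ) (ht1 : 1 ≤ t) (ht2 : t ≤ N - 1)
    (ζ : ℂ) (hζ : ζ = Complex.exp (2 * Real.pi * Complex.I / N))
    (hne : ζ ^ t ≠ -1) :
    ‖((1 - ζ) / (1 - ζ ^ t)) ^ 3 * ((1 + ζ ^ t) / (1 + ζ))‖ =
      (Real.sin (Real.pi / N) / Real.sin (t * Real.pi / N)) ^ 3 *
        |Real.cos (t * Real.pi / N)| / Real.cos (Real.pi / N) ∧
    ‖((1 - ζ) / (1 - ζ ^ t)) ^ 3 * ((1 + ζ ^ t) / (1 + ζ))‖ ≤ 1 :=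
  stmt_4_general N t ht1 ht2 ζ hζ
end

section
/- Let d ≤ -39 be a real number, A = e^{-π√(-d)}. Then 3.05 · A^{1/8} · exp( 8A/(1-A) + A^{1/D}/(1-A^{1/D}) + 1/(1-A^{1/D}) + 2A^{1/1.03}/(1-A^{1/1.03}) + 4A^{1/(1.03D)}/(1-A^{1/(1.03D)}) + 4A^{1/(2.06D)}/(1-A^{1/(1.03D)}) ) < 1, where D = √(-d/3), so that A^{1/D} = e^{-π√3}. -/
open Real Finset in
private lemma taylor_le_exp (x : ℝ) (hx : 0 ≤ x) (n : ℕ) :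
    ∑ i ∈ range n, x ^ i / (Nat.factorial i) ≤ Real.exp x :=
  Real.sum_le_exp_of_nonneg hx n

set_option maxHeartbeats 1000000 in
theorem stmt_14 (d : ℝ) (hd : d ≤ -39)
    (A : ℝ) (hA : A = Real.exp (-Real.pi * Real.sqrt (-d)))
    (D : ℝ) (hD : D = Real.sqrt (-d / 3)) :
    3.05 * A ^ ((1 : ℝ) / 8) *
      Real.exp (8 * A / (1 - A) + A ^ (1 / D) / (1 - A ^ (1 / D)) + 1 / (1 - A ^ (1 / D)) +
        2 * A ^ ((1 : ℝ) / 1.03) / (1 - A ^ ((1 : ℝ) / 1.03)) +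
        4 * A ^ (1 / (1.03 * D)) / (1 - A ^ (1 / (1.03 * D))) +
        4 * A ^ (1 / (2.06 * D)) / (1 - A ^ (1 / (1.03 * D)))) < 1 := by
  have hd0 : (0:ℝ) < -d := by linarith
  have hsd : 0 < Real.sqrt (-d) := Real.sqrt_pos.mpr hd0
  have hD0 : 0 < D := by rw [hD]; exact Real.sqrt_pos.mpr (by linarith)
  set x := Real.pi * Real.sqrt (-d) with hxdef
  set s := Real.pi * Real.sqrt 3 with hsdef
  have hA' : A = Real.exp (-x) := by rw [hA]; congr 1; rw [hxdef]; ring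
  have hpow : ∀ y : ℝ, A ^ y = Real.exp (-(x * y)) := by
    intro y
    rw [hA', ← Real.exp_mul]
    congr 1; ring
  -- x = s * D
  have hmulsqrt : Real.sqrt 3 * Real.sqrt (-d / 3) = Real.sqrt (-d) := by
    rw [← Real.sqrt_mul (by norm_num : (0:ℝ) ≤ 3)]
    congr 1; ring
  have hxs : x = s * D := by
    rw [hxdef, hsdef, hD, mul_assoc, hmulsqrt]
  have hDne : D ≠ 0 := ne_of_gt hD0
  have e1 : -(x * (1/D)) = -s := by rw [hxs]; field_simp
  have e2 : -(x * (1/(1.03*D))) = -(s/1.03) := by rw [hxs]; field_simp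
  have e3 : -(x * (1/(2.06*D))) = -(s/2.06) := by rw [hxs]; field_simp
  rw [hpow ((1:ℝ)/8), hpow (1/D), hpow ((1:ℝ)/1.03), hpow (1/(1.03*D)),
    hpow (1/(2.06*D)), hA', e1, e2, e3]
  -- numeric bounds
  have hpi : (3.141592:ℝ) < Real.pi := Real.pi_gt_d6
  have hsqrt3 : (1.7320508:ℝ) ≤ Real.sqrt 3 := by
    have h := Real.sq_sqrt (by norm_num : (3:ℝ) ≥ 0)
    nlinarith [Real.sqrt_nonneg 3]
  have hs : (5.4413:ℝ) ≤ s := by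
    rw [hsdef]; nlinarith
  have hsqrt39 : (6.24499:ℝ) ≤ Real.sqrt (-d) := by
    have h := Real.sq_sqrt (le_of_lt hd0)
    nlinarith [Real.sqrt_nonneg (-d)]
  have hx19 : (19.6188:ℝ) ≤ x := by
    rw [hxdef]; nlinarith
  have he1 : (2.7182818283:ℝ) ≤ Real.exp 1 := le_of_lt Real.exp_one_gt_d9
  have hexp1pos : (0:ℝ) < Real.exp 1 := Real.exp_pos 1
  -- exp 12 ≥ 100000
  have h12 : (100000:ℝ) ≤ Real.exp 12 := by
    have : Real.exp 12 = Real.exp 1 ^ (12:ℕ) := by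
      rw [← Real.exp_nat_mul]; norm_num
    rw [this]
    calc (100000:ℝ) ≤ 2.7182818283 ^ (12:ℕ) := by norm_num
      _ ≤ Real.exp 1 ^ (12:ℕ) := by
          exact pow_le_pow_left₀ (by norm_num) he1 12
  -- generic: exp (k + f) ≥ e^k * taylor
  have hsplit : ∀ (f : ℝ), Real.exp (5 + f) = Real.exp 1 ^ (5:ℕ) * Real.exp f := by
    intro f
    rw [← Real.exp_nat_mul, ← Real.exp_add]; norm_num
  have h230 : (230.5:ℝ) ≤ Real.exp 5.4413 := by
    have h : Real.exp 5.4413 = Real.exp 1 ^ (5:ℕ) * Real.exp 0.4413 := by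
      rw [← hsplit]; norm_num
    have hT : (1.5547:ℝ) ≤ Real.exp 0.4413 := by
      refine le_trans ?_ (taylor_le_exp 0.4413 (by norm_num) 6)
      simp [Finset.sum_range_succ, Nat.factorial]; norm_num
    rw [h]
    calc (230.5:ℝ) ≤ 2.7182818283 ^ (5:ℕ) * 1.5547 := by norm_num
      _ ≤ Real.exp 1 ^ (5:ℕ) * Real.exp 0.4413 :=
          mul_le_mul (pow_le_pow_left₀ (by norm_num) he1 5) hT (by norm_num) (by positivity)
  have h196 : (196.9:ℝ) ≤ Real.exp 5.28281 := by
    have h : Real.exp 5.28281 = Real.exp 1 ^ (5:ℕ) * Real.exp 0.28281 := by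
      rw [← hsplit]; norm_num
    have hT : (1.32685:ℝ) ≤ Real.exp 0.28281 := by
      refine le_trans ?_ (taylor_le_exp 0.28281 (by norm_num) 6)
      simp [Finset.sum_range_succ, Nat.factorial]; norm_num
    rw [h]
    calc (196.9:ℝ) ≤ 2.7182818283 ^ (5:ℕ) * 1.32685 := by norm_num
      _ ≤ Real.exp 1 ^ (5:ℕ) * Real.exp 0.28281 :=
          mul_le_mul (pow_le_pow_left₀ (by norm_num) he1 5) hT (by norm_num) (by positivity)
  have h1403 : (14.03:ℝ) ≤ Real.exp 2.6414 := by
    have h : Real.exp 2.6414 = Real.exp 1 ^ (2:ℕ) * Real.exp 0.6414 := by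
      rw [← Real.exp_nat_mul, ← Real.exp_add]; norm_num
    have hT : (1.89912:ℝ) ≤ Real.exp 0.6414 := by
      refine le_trans ?_ (taylor_le_exp 0.6414 (by norm_num) 7)
      simp [Finset.sum_range_succ, Nat.factorial]; norm_num
    rw [h]
    calc (14.03:ℝ) ≤ 2.7182818283 ^ (2:ℕ) * 1.89912 := by norm_num
      _ ≤ Real.exp 1 ^ (2:ℕ) * Real.exp 0.6414 :=
          mul_le_mul (pow_le_pow_left₀ (by norm_num) he1 2) hT (by norm_num) (by positivity)
  have h311 : (3.06:ℝ) ≤ Real.exp 1.13652 := by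
    refine le_trans ?_ (taylor_le_exp 1.13652 (by norm_num) 6)
    simp [Finset.sum_range_succ, Nat.factorial]; norm_num
  -- bounds on the exp terms
  have hinv : ∀ c c' M : ℝ, c ≤ c' → (M:ℝ) ≤ Real.exp c → 0 < M →
      Real.exp (-c') ≤ 1 / M := by
    intro c c' M hcc hM hMpos
    rw [Real.exp_neg]
    have h1 : Real.exp c ≤ Real.exp c' := Real.exp_le_exp.mpr hcc
    have h2 : (0:ℝ) < Real.exp c' := Real.exp_pos _
    rw [inv_le_iff_one_le_mul₀ h2] at *
    · rw [div_mul_eq_mul_div, le_div_iff₀ hMpos]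
      nlinarith
  have ht1 : Real.exp (-s) ≤ 0.00434 := by
    have := hinv 5.4413 s 230.5 hs h230 (by norm_num)
    calc Real.exp (-s) ≤ 1/230.5 := this
      _ ≤ 0.00434 := by norm_num
  have ht2 : Real.exp (-(s/1.03)) ≤ 0.00508 := by
    have hcc : (5.28281:ℝ) ≤ s/1.03 := by
      rw [le_div_iff₀ (by norm_num : (0:ℝ) < 1.03)]; linarith
    have := hinv 5.28281 (s/1.03) 196.9 hcc h196 (by norm_num)
    calc Real.exp (-(s/1.03)) ≤ 1/196.9 := this
      _ ≤ 0.00508 := by norm_num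
  have ht3 : Real.exp (-(s/2.06)) ≤ 0.07128 := by
    have hcc : (2.6414:ℝ) ≤ s/2.06 := by
      rw [le_div_iff₀ (by norm_num : (0:ℝ) < 2.06)]; linarith
    have := hinv 2.6414 (s/2.06) 14.03 hcc h1403 (by norm_num)
    calc Real.exp (-(s/2.06)) ≤ 1/14.03 := this
      _ ≤ 0.07128 := by norm_num
  have ha : Real.exp (-x) ≤ 0.00001 := by
    have hcc : (12:ℝ) ≤ x := by linarith
    have := hinv 12 x 100000 hcc h12 (by norm_num)
    calc Real.exp (-x) ≤ 1/100000 := this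
      _ ≤ 0.00001 := by norm_num
  have hb : Real.exp (-(x * (1/1.03))) ≤ 0.00001 := by
    have hcc : (12:ℝ) ≤ x * (1/1.03) := by
      rw [mul_one_div, le_div_iff₀ (by norm_num : (0:ℝ) < 1.03)]; linarith
    have := hinv 12 (x * (1/1.03)) 100000 hcc h12 (by norm_num)
    calc Real.exp (-(x * (1/1.03))) ≤ 1/100000 := this
      _ ≤ 0.00001 := by norm_num
  -- positivity
  have pa : (0:ℝ) < Real.exp (-x) := Real.exp_pos _
  have pb : (0:ℝ) < Real.exp (-(x*(1/1.03))) := Real.exp_pos _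
  have p1 : (0:ℝ) < Real.exp (-s) := Real.exp_pos _
  have p2 : (0:ℝ) < Real.exp (-(s/1.03)) := Real.exp_pos _
  have p3 : (0:ℝ) < Real.exp (-(s/2.06)) := Real.exp_pos _
  -- bound the exponent sum
  have f1 : 8 * Real.exp (-x) / (1 - Real.exp (-x)) ≤ 0.000081 := by
    rw [div_le_iff₀ (by linarith)]; nlinarith
  have f2 : Real.exp (-s) / (1 - Real.exp (-s)) ≤ 0.004359 := by
    rw [div_le_iff₀ (by linarith)]; nlinarith
  have f3 : 1 / (1 - Real.exp (-s)) ≤ 1.004360 := by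
    rw [div_le_iff₀ (by linarith)]; nlinarith
  have f4 : 2 * Real.exp (-(x*(1/1.03))) / (1 - Real.exp (-(x*(1/1.03)))) ≤ 0.000021 := by
    rw [div_le_iff₀ (by linarith)]; nlinarith
  have f5 : 4 * Real.exp (-(s/1.03)) / (1 - Real.exp (-(s/1.03))) ≤ 0.020424 := by
    rw [div_le_iff₀ (by linarith)]; nlinarith
  have f6 : 4 * Real.exp (-(s/2.06)) / (1 - Real.exp (-(s/1.03))) ≤ 0.286580 := by
    rw [div_le_iff₀ (by linarith)]; nlinarith
  have hE : 8 * Real.exp (-x) / (1 - Real.exp (-x)) +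
      Real.exp (-s) / (1 - Real.exp (-s)) + 1 / (1 - Real.exp (-s)) +
      2 * Real.exp (-(x*(1/1.03))) / (1 - Real.exp (-(x*(1/1.03)))) +
      4 * Real.exp (-(s/1.03)) / (1 - Real.exp (-(s/1.03))) +
      4 * Real.exp (-(s/2.06)) / (1 - Real.exp (-(s/1.03))) ≤ 1.31583 := by
    linarith
  -- final combination
  have hkey : Real.exp (-(x * (1/8))) *
      Real.exp (8 * Real.exp (-x) / (1 - Real.exp (-x)) +
        Real.exp (-s) / (1 - Real.exp (-s)) + 1 / (1 - Real.exp (-s)) +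
        2 * Real.exp (-(x*(1/1.03))) / (1 - Real.exp (-(x*(1/1.03)))) +
        4 * Real.exp (-(s/1.03)) / (1 - Real.exp (-(s/1.03))) +
        4 * Real.exp (-(s/2.06)) / (1 - Real.exp (-(s/1.03)))) ≤ Real.exp (-1.13652) := by
    rw [← Real.exp_add]
    apply Real.exp_le_exp.mpr
    have : (2.45235:ℝ) ≤ x * (1/8) := by linarith
    linarith
  have hfin : (3.05:ℝ) * Real.exp (-1.13652) < 1 := by
    rw [Real.exp_neg]
    calc (3.05:ℝ) * (Real.exp 1.13652)⁻¹ ≤ 3.05 * (3.06:ℝ)⁻¹ := by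
          apply mul_le_mul_of_nonneg_left _ (by norm_num)
          exact inv_anti₀ (by norm_num) h311
      _ < 1 := by norm_num
  calc 3.05 * Real.exp (-(x * (1/8))) *
      Real.exp (8 * Real.exp (-x) / (1 - Real.exp (-x)) +
        Real.exp (-s) / (1 - Real.exp (-s)) + 1 / (1 - Real.exp (-s)) +
        2 * Real.exp (-(x*(1/1.03))) / (1 - Real.exp (-(x*(1/1.03)))) +
        4 * Real.exp (-(s/1.03)) / (1 - Real.exp (-(s/1.03))) +
        4 * Real.exp (-(s/2.06)) / (1 - Real.exp (-(s/1.03))))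
      ≤ 3.05 * Real.exp (-1.13652) := by
        rw [mul_assoc]
        exact mul_le_mul_of_nonneg_left hkey (by norm_num)
    _ < 1 := hfin
end
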